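/- arXiv:2204.12020 — 5 statements merged into one kernel-verified Lean document; each statement's English description precedes it below -/
import Mathlib

section
/- Suppose P_SL < P_ID, P_SL < P_B, P_SL < P_ST, and let θ ∈ (0,1], λ > 0, h > 0, u ≥ 0 be fixed. Define E[P](N) = [P_B·h + ((1-θ)/λ)·P_ID + θ·((N/λ)·P_SL + u·P_ST)] / [h + θ·((N-1)/λ + u) + 1/λ] for N ≥ 1. Then E[P](N) is strictly decreasing in N, and lim_{N→∞} E[P](N) = P_SL < E[P](N) for every finite N ≥ 1. -/
/-!
Measured against `P_SL`, the energy consumed per cycle exceeds `P_SL` times the mean cycle length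
`D(N) = h + θ((N - 1)/λ + u) + 1/λ` by the amount
`K = (P_B - P_SL) h + ((1 - θ)/λ) (P_ID - P_SL) + θ u (P_ST - P_SL)`,
which does not depend on `N` and is positive. Hence `E[P](N) = P_SL + K / D(N)`, and `D` is affine
in `N` with slope `θ/λ > 0`.
-/

open Filter Set

theorem StrictMonoOn.strictAntiOn_const_add_div {α 𝕜 : Type*} [Preorder α] [Field 𝕜]
    [LinearOrder 𝕜] [IsStrictOrderedRing 𝕜] {D : α → 𝕜} {s : Set α} (hD : StrictMonoOn D s)
    (hD₀ : ∀ x ∈ s, 0 < D x) (p : 𝕜) {K : 𝕜} (hK : 0 < K) :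
    StrictAntiOn (fun x => p + K / D x) s :=
  fun _ hx _ hy hxy => add_lt_add_right (div_lt_div_of_pos_left hK (hD₀ _ hx) (hD hx hy hxy)) p

noncomputable def meanCycleLength (θ lam h u N : ℝ) : ℝ :=
  h + θ * ((N - 1) / lam + u) + 1 / lam

noncomputable def energyRate (PB PID PSL PST θ lam h u N : ℝ) : ℝ :=
  (PB * h + ((1 - θ) / lam) * PID + θ * ((N / lam) * PSL + u * PST)) /
    meanCycleLength θ lam h u N

noncomputable def excessEnergy (PB PID PSL PST θ lam h u : ℝ) : ℝ :=
  (PB - PSL) * h + ((1 - θ) / lam) * (PID - PSL) + θ * u * (PST - PSL)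

section

variable {θ lam h u : ℝ}

theorem meanCycleLength_strictMono (hθ : 0 < θ) (hlam : 0 < lam) :
    StrictMono (meanCycleLength θ lam h u) := by
  intro M N hMN
  unfold meanCycleLength
  gcongr

theorem meanCycleLength_pos (hθ : 0 ≤ θ) (hlam : 0 < lam) (hh : 0 < h) (hu : 0 ≤ u) {N : ℝ}
    (hN : 1 ≤ N) : 0 < meanCycleLength θ lam h u N := by
  have : 0 ≤ (N - 1) / lam := div_nonneg (by linarith) hlam.le
  unfold meanCycleLength
  positivity

theorem tendsto_meanCycleLength_atTop (hθ : 0 < θ) (hlam : 0 < lam) :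
    Tendsto (meanCycleLength θ lam h u) atTop atTop := by
  unfold meanCycleLength
  refine tendsto_atTop_add_const_right _ _ (tendsto_atTop_add_const_left _ _ ?_)
  refine Tendsto.const_mul_atTop hθ (tendsto_atTop_add_const_right _ _ ?_)
  exact (tendsto_atTop_add_const_right _ _ tendsto_id).atTop_div_const hlam

end

theorem excessEnergy_pos {PB PID PSL PST θ lam h u : ℝ} (h1 : PSL < PID) (h2 : PSL < PB)
    (h3 : PSL < PST) (hθ0 : 0 ≤ θ) (hθ1 : θ ≤ 1) (hlam : 0 < lam) (hh : 0 < h) (hu : 0 ≤ u) :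
    0 < excessEnergy PB PID PSL PST θ lam h u := by
  have : 0 ≤ 1 - θ := by linarith
  have : 0 < PB - PSL := by linarith
  have : 0 ≤ PID - PSL := by linarith
  have : 0 ≤ PST - PSL := by linarith
  unfold excessEnergy
  positivity

theorem energyRate_eq_add_div (PB PID PSL PST θ lam h u N : ℝ)
    (hD : meanCycleLength θ lam h u N ≠ 0) :
    energyRate PB PID PSL PST θ lam h u N =
      PSL + excessEnergy PB PID PSL PST θ lam h u / meanCycleLength θ lam h u N := by
  rw [energyRate, add_div' _ _ _ hD]
  unfold meanCycleLength excessEnergy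
  ring

theorem stmt_4_general (PB PID PSL PST θ lam h u : ℝ)
    (h1 : PSL < PID) (h2 : PSL < PB) (h3 : PSL < PST)
    (hθ0 : 0 < θ) (hθ1 : θ ≤ 1) (hlam : 0 < lam) (hh : 0 < h) (hu : 0 ≤ u) :
    StrictAntiOn (fun N : ℝ =>
        (PB * h + ((1 - θ) / lam) * PID + θ * ((N / lam) * PSL + u * PST)) /
          (h + θ * ((N - 1) / lam + u) + 1 / lam)) (Set.Ici 1) ∧
    Tendsto (fun N : ℝ =>
        (PB * h + ((1 - θ) / lam) * PID + θ * ((N / lam) * PSL + u * PST)) /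
          (h + θ * ((N - 1) / lam + u) + 1 / lam)) atTop (nhds PSL) ∧
    ∀ N : ℝ, 1 ≤ N →
      PSL < (PB * h + ((1 - θ) / lam) * PID + θ * ((N / lam) * PSL + u * PST)) /
          (h + θ * ((N - 1) / lam + u) + 1 / lam) := by
  set E := energyRate PB PID PSL PST θ lam h u
  change StrictAntiOn E (Ici 1) ∧ Tendsto E atTop (nhds PSL) ∧ ∀ N : ℝ, 1 ≤ N → PSL < E N
  set D := meanCycleLength θ lam h u
  set K := excessEnergy PB PID PSL PST θ lam h u
  have hK : 0 < K := excessEnergy_pos h1 h2 h3 hθ0.le hθ1 hlam hh hu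
  have hD₀ : ∀ N ∈ Ici (1 : ℝ), 0 < D N := fun N hN => meanCycleLength_pos hθ0.le hlam hh hu hN
  have hE : EqOn E (fun N => PSL + K / D N) (Ici 1) :=
    fun N hN => energyRate_eq_add_div PB PID PSL PST θ lam h u N (hD₀ N hN).ne'
  refine ⟨fun M hM N hN hMN => ?_, ?_, fun N hN => ?_⟩
  · rw [hE hM, hE hN]
    exact ((meanCycleLength_strictMono hθ0 hlam).strictMonoOn _).strictAntiOn_const_add_div
      hD₀ PSL hK hM hN hMN
  · refine Tendsto.congr' (hE.eventuallyEq_of_mem (Ici_mem_atTop 1)).symm ?_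
    simpa using tendsto_const_nhds.add ((tendsto_meanCycleLength_atTop hθ0 hlam).const_div_atTop K)
  · rw [hE hN]
    exact lt_add_of_pos_right PSL (div_pos hK (hD₀ N hN))

/-- With `P_SL` smaller than the other power rates, the energy consumption rate
`E[P](N)` is strictly decreasing in `N` on `[1, ∞)`, tends to `P_SL` as `N → ∞`,
and exceeds `P_SL` at every finite `N ≥ 1`. -/
theorem stmt_4 (PB PID PSL PST θ lam h u : ℝ)
    (hPB : 0 < PB) (hPID : 0 < PID) (hPSL : 0 < PSL) (hPST : 0 < PST)
    (h1 : PSL < PID) (h2 : PSL < PB) (h3 : PSL < PST)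
    (hθ0 : 0 < θ) (hθ1 : θ ≤ 1) (hlam : 0 < lam) (hh : 0 < h) (hu : 0 ≤ u) :
    StrictAntiOn (fun N : ℝ =>
        (PB * h + ((1 - θ) / lam) * PID + θ * ((N / lam) * PSL + u * PST)) /
          (h + θ * ((N - 1) / lam + u) + 1 / lam)) (Set.Ici 1) ∧
    Tendsto (fun N : ℝ =>
        (PB * h + ((1 - θ) / lam) * PID + θ * ((N / lam) * PSL + u * PST)) /
          (h + θ * ((N - 1) / lam + u) + 1 / lam)) atTop (nhds PSL) ∧
    ∀ N : ℝ, 1 ≤ N →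
      PSL < (PB * h + ((1 - θ) / lam) * PID + θ * ((N / lam) * PSL + u * PST)) /
          (h + θ * ((N - 1) / lam + u) + 1 / lam) :=
  stmt_4_general PB PID PSL PST θ lam h u h1 h2 h3 hθ0 hθ1 hlam hh hu
end

section
/- Let H be a nonnegative random variable with finite second moment and λ > 0, N ≥ 1 integer, u, u₂ ≥ 0 with u₂ ≥ u², and θ^HT = θ^BS = θ ∈ [0,1]. Define, for the Hysteresis Time scheme with hysteresis variable D (nonnegative, with E[e^{-λD}] = θ), M_HT = E[I²] as in Eq. (14) and M_BS = E[I²] as in Eq. (21) of the paper. Then M_BS - M_HT = 2E[De^{-λD}]·((1-N)/λ - u) ≤ 0 whenever N ≥ 1, hence E[Δ^BS] ≤ E[Δ^HT]. -/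
open MeasureTheory

/-! The terms involving `E[H]`, `E[H²]`, `θ` and `u₂` are the same in both second moments, so
`M_BS - M_HT` reduces to the hysteresis contribution `2 E[D e^{-λD}] ((1 - N)/λ - u)`.
Since `D ≥ 0` makes `E[D e^{-λD}] ≥ 0`, and `N ≥ 1`, `u ≥ 0`, this is nonpositive. -/

lemma integral_mul_exp_neg_mul_nonneg {Ω : Type*} [MeasurableSpace Ω] {μ : Measure Ω}
    {D : Ω → ℝ} (hD0 : ∀ ω, 0 ≤ D ω) (lam : ℝ) :
    0 ≤ ∫ ω, D ω * Real.exp (-lam * D ω) ∂μ :=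
  integral_nonneg fun ω => mul_nonneg (hD0 ω) (Real.exp_pos _).le

lemma mul_sub_div_sub_nonpos {d lam N u : ℝ} (hd : 0 ≤ d) (hlam : 0 < lam) (hN : 1 ≤ N)
    (hu : 0 ≤ u) : 2 * d * ((1 - N) / lam - u) ≤ 0 := by
  have hfrac : (1 - N) / lam ≤ 0 := div_nonpos_of_nonpos_of_nonneg (by linarith) hlam.le
  exact mul_nonpos_of_nonneg_of_nonpos (by linarith) (by linarith)

theorem stmt_9_general {Ω : Type*} [MeasureSpace Ω] {μ : Measure Ω}
    (H D : Ω → ℝ) (hD0 : ∀ ω, 0 ≤ D ω)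
    (lam : ℝ) (hlam : 0 < lam) (N : ℕ) (hN : 1 ≤ N)
    (u u₂ : ℝ) (hu : 0 ≤ u) :
    let EH : ℝ := ∫ ω, H ω ∂μ
    let EH2 : ℝ := ∫ ω, H ω ^ 2 ∂μ
    let θ : ℝ := ∫ ω, Real.exp (-lam * D ω) ∂μ
    let d : ℝ := ∫ ω, D ω * Real.exp (-lam * D ω) ∂μ
    let MHT : ℝ := 2 * (1 - θ) / lam ^ 2 - 2 * d / lam + 2 * (N : ℝ) * d / lam
      + 2 * d * u + θ * (N : ℝ) * ((N : ℝ) + 1) / lam ^ 2 + 2 * θ * (N : ℝ) * u / lam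
      + θ * u₂ + EH2 + 2 * EH * ((1 - θ) / lam + θ * ((N : ℝ) / lam + u))
    let MBS : ℝ := 2 * EH * ((1 - θ + (N : ℝ) * θ) / lam + θ * u)
      + 2 * (1 - θ) / lam ^ 2 + θ * (N : ℝ) * ((N : ℝ) + 1) / lam ^ 2 + EH2
      + 2 * θ * (N : ℝ) * u / lam + θ * u₂
    MBS - MHT = 2 * d * ((1 - (N : ℝ)) / lam - u) ∧ MBS ≤ MHT := by
  intro EH EH2 θ d MHT MBS
  have hdiff : MBS - MHT = 2 * d * ((1 - (N : ℝ)) / lam - u) := by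
    simp only [MBS, MHT]
    ring
  have hpenalty : 2 * d * ((1 - (N : ℝ)) / lam - u) ≤ 0 :=
    mul_sub_div_sub_nonpos (integral_mul_exp_neg_mul_nonneg hD0 lam) hlam
      (by exact_mod_cast hN) hu
  exact ⟨hdiff, sub_nonpos.mp (hdiff ▸ hpenalty)⟩

/-- Comparison of the second moments of the informative inter-departure interval
under the Hysteresis Time scheme (Eq. (14)) and the Bernoulli Sleep scheme
(Eq. (21)) with equal sleeping probabilities `θ = E[e^{-λD}]`:
`M_BS - M_HT = 2E[De^{-λD}]·((1-N)/λ - u) ≤ 0`, hence `E[Δ^BS] ≤ E[Δ^HT]`. -/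
theorem stmt_9 {Ω : Type*} [MeasureSpace Ω] {μ : Measure Ω} [IsProbabilityMeasure μ]
    (H D : Ω → ℝ) (hH0 : ∀ ω, 0 ≤ H ω) (hD0 : ∀ ω, 0 ≤ D ω)
    (hHm : Measurable H) (hDm : Measurable D)
    (hHi : Integrable H μ) (hH2 : Integrable (fun ω => H ω ^ 2) μ)
    (lam : ℝ) (hlam : 0 < lam) (N : ℕ) (hN : 1 ≤ N)
    (u u₂ : ℝ) (hu : 0 ≤ u) (hu2 : u ^ 2 ≤ u₂) :
    let EH : ℝ := ∫ ω, H ω ∂μ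
    let EH2 : ℝ := ∫ ω, H ω ^ 2 ∂μ
    let θ : ℝ := ∫ ω, Real.exp (-lam * D ω) ∂μ
    let d : ℝ := ∫ ω, D ω * Real.exp (-lam * D ω) ∂μ
    let MHT : ℝ := 2 * (1 - θ) / lam ^ 2 - 2 * d / lam + 2 * (N : ℝ) * d / lam
      + 2 * d * u + θ * (N : ℝ) * ((N : ℝ) + 1) / lam ^ 2 + 2 * θ * (N : ℝ) * u / lam
      + θ * u₂ + EH2 + 2 * EH * ((1 - θ) / lam + θ * ((N : ℝ) / lam + u))
    let MBS : ℝ := 2 * EH * ((1 - θ + (N : ℝ) * θ) / lam + θ * u)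
      + 2 * (1 - θ) / lam ^ 2 + θ * (N : ℝ) * ((N : ℝ) + 1) / lam ^ 2 + EH2
      + 2 * θ * (N : ℝ) * u / lam + θ * u₂
    MBS - MHT = 2 * d * ((1 - (N : ℝ)) / lam - u) ∧ MBS ≤ MHT :=
  stmt_9_general H D hD0 lam hlam N hN u u₂ hu
end

section
/- Let H be a nonnegative random variable, b ≥ 0, λ > 0, N ≥ 1, u ≥ 0, and let θ = E[e^{-bH}]. With M_CS and M_BS denoting the second moments E[I²] under the Conditional Sleep and Bernoulli Sleep schemes (Eqs. (29) and (21)) with the same θ, M_CS - M_BS = -2(E[H]E[e^{-bH}] - E[He^{-bH}])·((N-1)/λ + u) ≤ 0, hence E[Δ^CS] ≤ E[Δ^BS]. -/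
/-!
Chebyshev's association inequality: for oppositely ordered `f` and `g`, the integrand
`(f x - f y) * (g x - g y)` is pointwise nonpositive, and its double integral is
`2 (E[fg] - E[f] E[g])`. Applied to `H` and `e^{-bH}` it gives `E[H e^{-bH}] ≤ E[H] E[e^{-bH}]`;
the difference of the two second moments is an exact algebraic identity whose remaining factor
`(N - 1) / λ + u` is nonnegative.
-/

open MeasureTheory

theorem Antivary.integral_mul_le_integral_mul_integral {Ω : Type*} [MeasurableSpace Ω]
    {μ : Measure Ω} [IsProbabilityMeasure μ] {f g : Ω → ℝ} (hfg : Antivary f g)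
    (hf : Integrable f μ) (hg : Integrable g μ) (hfg_int : Integrable (fun ω => f ω * g ω) μ) :
    ∫ ω, f ω * g ω ∂μ ≤ (∫ ω, f ω ∂μ) * ∫ ω, g ω ∂μ := by
  have inner : ∀ x, ∫ y, (f x - f y) * (g x - g y) ∂μ
      = f x * g x - f x * ∫ y, g y ∂μ - g x * ∫ y, f y ∂μ + ∫ y, f y * g y ∂μ := by
    intro x
    have hexp : (fun y => (f x - f y) * (g x - g y))
        = fun y => (f x * g x - f x * g y) - (g x * f y - f y * g y) := by
      funext y; ring
    rw [hexp, integral_sub ((integrable_const _).sub' (hg.const_mul _))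
      ((hf.const_mul _).sub' hfg_int), integral_sub (integrable_const _) (hg.const_mul _),
      integral_sub (hf.const_mul _) hfg_int]
    simp only [integral_const_mul, integral_const, probReal_univ, one_smul]
    ring
  have hnonpos : ∫ x, ∫ y, (f x - f y) * (g x - g y) ∂μ ∂μ ≤ 0 :=
    integral_nonpos fun x => integral_nonpos fun y => hfg.sub_mul_sub_nonpos y x
  simp only [inner] at hnonpos
  rw [integral_add ((hfg_int.sub' (hf.mul_const _)).sub' (hg.mul_const _)) (integrable_const _),
    integral_sub (hfg_int.sub' (hf.mul_const _)) (hg.mul_const _),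
    integral_sub hfg_int (hf.mul_const _)] at hnonpos
  simp only [integral_mul_const, integral_const, probReal_univ, one_smul] at hnonpos
  linarith

theorem integral_mul_exp_neg_mul_le {Ω : Type*} [MeasurableSpace Ω] {μ : Measure Ω}
    [IsProbabilityMeasure μ] {H : Ω → ℝ} (hH0 : ∀ ω, 0 ≤ H ω) (hHi : Integrable H μ)
    {b : ℝ} (hb : 0 ≤ b) :
    ∫ ω, H ω * Real.exp (-b * H ω) ∂μ
      ≤ (∫ ω, H ω ∂μ) * ∫ ω, Real.exp (-b * H ω) ∂μ := by
  have hanti : Antivary H (fun ω => Real.exp (-b * H ω)) :=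
    ((monovary_self H).comp_antitone_left (f' := fun t => Real.exp (-b * t))
      fun s t hst => Real.exp_le_exp.2 (by nlinarith)).symm
  have hmeas : AEStronglyMeasurable (fun ω => Real.exp (-b * H ω)) μ :=
    (Real.continuous_exp.comp (continuous_const_mul (-b))).comp_aestronglyMeasurable
      hHi.aestronglyMeasurable
  have hbound : ∀ᵐ ω ∂μ, ‖Real.exp (-b * H ω)‖ ≤ 1 := Filter.Eventually.of_forall fun ω => by
    rw [Real.norm_of_nonneg (Real.exp_pos _).le, Real.exp_le_one_iff]
    nlinarith [hH0 ω]
  exact hanti.integral_mul_le_integral_mul_integral hHi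
    ((integrable_const 1).mono' hmeas hbound) (hHi.mul_bdd hmeas hbound)

theorem stmt_10_general {Ω : Type*} [MeasureSpace Ω] {μ : Measure Ω} [IsProbabilityMeasure μ]
    (H : Ω → ℝ) (hH0 : ∀ ω, 0 ≤ H ω) (hHi : Integrable H μ)
    (b lam N u u₂ : ℝ) (hb : 0 ≤ b) (hlam : 0 < lam) (hN : 1 ≤ N)
    (hu : 0 ≤ u) :
    let EH : ℝ := ∫ ω, H ω ∂μ
    let EH2 : ℝ := ∫ ω, H ω ^ 2 ∂μ
    let θ : ℝ := ∫ ω, Real.exp (-b * H ω) ∂μ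
    let Hb : ℝ := ∫ ω, H ω * Real.exp (-b * H ω) ∂μ
    let MCS : ℝ := 2 * (EH - Hb) / lam + 2 * (1 - θ) / lam ^ 2 + 2 * Hb * N / lam
      + 2 * Hb * u + N * (N + 1) * θ / lam ^ 2 + 2 * θ * N * u / lam + θ * u₂ + EH2
    let MBS : ℝ := 2 * EH * ((1 - θ + N * θ) / lam + θ * u)
      + 2 * (1 - θ) / lam ^ 2 + θ * N * (N + 1) / lam ^ 2 + EH2
      + 2 * θ * N * u / lam + θ * u₂
    MCS - MBS = -(2 * (EH * θ - Hb) * ((N - 1) / lam + u)) ∧ MCS ≤ MBS := by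
  intro EH EH2 θ Hb MCS MBS
  have hid : MCS - MBS = -(2 * (EH * θ - Hb) * ((N - 1) / lam + u)) := by
    simp only [MCS, MBS]
    ring
  have hcov : 0 ≤ EH * θ - Hb := sub_nonneg.2 (integral_mul_exp_neg_mul_le hH0 hHi hb)
  have hfactor : 0 ≤ (N - 1) / lam + u :=
    add_nonneg (div_nonneg (sub_nonneg.2 hN) hlam.le) hu
  refine ⟨hid, sub_nonpos.1 ?_⟩
  rw [hid, neg_nonpos]
  exact mul_nonneg (mul_nonneg zero_le_two hcov) hfactor

/-- Comparison of the second moments of the informative inter-departure interval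
under the Conditional Sleep scheme (Eq. (29)) and the Bernoulli Sleep scheme
(Eq. (21)) with the same sleeping probability `θ = E[e^{-bH}]`:
`M_CS - M_BS = -2(E[H]E[e^{-bH}] - E[He^{-bH}])·((N-1)/λ + u) ≤ 0`,
hence `E[Δ^CS] ≤ E[Δ^BS]`. -/
theorem stmt_10 {Ω : Type*} [MeasureSpace Ω] {μ : Measure Ω} [IsProbabilityMeasure μ]
    (H : Ω → ℝ) (hH0 : ∀ ω, 0 ≤ H ω) (hHm : Measurable H)
    (hHi : Integrable H μ) (hH2 : Integrable (fun ω => H ω ^ 2) μ)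
    (b lam N u u₂ : ℝ) (hb : 0 ≤ b) (hlam : 0 < lam) (hN : 1 ≤ N)
    (hu : 0 ≤ u) (hu2 : u ^ 2 ≤ u₂) :
    let EH : ℝ := ∫ ω, H ω ∂μ
    let EH2 : ℝ := ∫ ω, H ω ^ 2 ∂μ
    let θ : ℝ := ∫ ω, Real.exp (-b * H ω) ∂μ
    let Hb : ℝ := ∫ ω, H ω * Real.exp (-b * H ω) ∂μ
    let MCS : ℝ := 2 * (EH - Hb) / lam + 2 * (1 - θ) / lam ^ 2 + 2 * Hb * N / lam
      + 2 * Hb * u + N * (N + 1) * θ / lam ^ 2 + 2 * θ * N * u / lam + θ * u₂ + EH2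
    let MBS : ℝ := 2 * EH * ((1 - θ + N * θ) / lam + θ * u)
      + 2 * (1 - θ) / lam ^ 2 + θ * N * (N + 1) / lam ^ 2 + EH2
      + 2 * θ * N * u / lam + θ * u₂
    MCS - MBS = -(2 * (EH * θ - Hb) * ((N - 1) / lam + u)) ∧ MCS ≤ MBS :=
  stmt_10_general H hH0 hHi b lam N u u₂ hb hlam hN hu
end

section
/- Let U be a nonnegative random variable, k ≥ 2, λ_1,…,λ_k > 0 with λ = Σ λ_j, and θ_1,…,θ_k ∈ [0,1]. Define f(λ_1,…,λ_k) = Σ_j θ_j(λ_j/λ)·(1 - E[e^{-λU}])/λ + 1/λ_i for a fixed index i. Then ∂f/∂λ_i ≤ -1/λ² + (1/λ³)·max{0, θ_i·[(λ-λ_i)(1-E[e^{-λU}]) + λ_i(λE[Ue^{-λU}] - 1 + E[e^{-λU}])]}, and in all cases ∂f/∂λ_i < 0; consequently f is strictly decreasing in λ_i. -/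
open MeasureTheory Finset

private lemma exp_integrable {Ω : Type*} [MeasureSpace Ω] {μ : Measure Ω}
    [IsProbabilityMeasure μ] (U : Ω → ℝ) (hU0 : ∀ ω, 0 ≤ U ω) (hUm : Measurable U)
    {s : ℝ} (hs : 0 ≤ s) : Integrable (fun ω => Real.exp (-s * U ω)) μ := by
  refine (integrable_const (1 : ℝ)).mono' (hUm.const_mul (-s)).exp.aestronglyMeasurable ?_
  filter_upwards with ω
  rw [Real.norm_eq_abs, abs_of_pos (Real.exp_pos _)]
  exact Real.exp_le_one_iff.mpr (by nlinarith [hU0 ω])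

private lemma Uexp_integrable {Ω : Type*} [MeasureSpace Ω] {μ : Measure Ω}
    [IsProbabilityMeasure μ] (U : Ω → ℝ) (hU0 : ∀ ω, 0 ≤ U ω) (hUm : Measurable U)
    (hUi : Integrable U μ) {s : ℝ} (hs : 0 ≤ s) :
    Integrable (fun ω => U ω * Real.exp (-s * U ω)) μ := by
  refine hUi.mono' (hUm.mul (hUm.const_mul (-s)).exp).aestronglyMeasurable ?_
  filter_upwards with ω
  have h1 : Real.exp (-s * U ω) ≤ 1 := Real.exp_le_one_iff.mpr (by nlinarith [hU0 ω])
  rw [Real.norm_eq_abs,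
    abs_of_nonneg (mul_nonneg (hU0 ω) (Real.exp_pos _).le)]
  nlinarith [hU0 ω, Real.exp_pos (-s * U ω)]

/-- derivative of the Laplace transform of `U` under the integral sign. -/
private lemma hasDerivAt_laplace {Ω : Type*} [MeasureSpace Ω] {μ : Measure Ω}
    [IsProbabilityMeasure μ] (U : Ω → ℝ) (hU0 : ∀ ω, 0 ≤ U ω) (hUm : Measurable U)
    (hUi : Integrable U μ) {s : ℝ} (hs : 0 < s) :
    HasDerivAt (fun x => ∫ ω, Real.exp (-x * U ω) ∂μ)
      (∫ ω, -(U ω * Real.exp (-s * U ω)) ∂μ) s := by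
  have key := hasDerivAt_integral_of_dominated_loc_of_deriv_le (μ := μ)
    (F := fun x ω => Real.exp (-x * U ω))
    (F' := fun x ω => -(U ω * Real.exp (-x * U ω)))
    (x₀ := s) (bound := fun ω => U ω) (Metric.ball_mem_nhds s (half_pos hs))
    (by filter_upwards with x
        exact (hUm.const_mul (-x)).exp.aestronglyMeasurable)
    (exp_integrable U hU0 hUm hs.le)
    ((hUm.mul (hUm.const_mul (-s)).exp).neg.aestronglyMeasurable)
    (by
      filter_upwards with ω x hx
      have hx0 : 0 < x := by
        have hd := abs_lt.1 (by simpa [Real.dist_eq] using Metric.mem_ball.1 hx)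
        linarith [hd.1]
      rw [Real.norm_eq_abs, abs_neg,
        abs_of_nonneg (mul_nonneg (hU0 ω) (Real.exp_pos _).le)]
      have h1 : Real.exp (-x * U ω) ≤ 1 := Real.exp_le_one_iff.mpr (by nlinarith [hU0 ω])
      nlinarith [hU0 ω, Real.exp_pos (-x * U ω)])
    hUi
    (by
      filter_upwards with ω x hx
      have h : HasDerivAt (fun y : ℝ => -y * U ω) (-1 * U ω) x :=
        (hasDerivAt_id x).neg.mul_const (U ω)
      have h2 := h.exp
      exact h2.congr_deriv (by ring))
  exact key.2

/-- Lemma 1 (crux): the function `f` collecting the `λ_i`-dependent terms of the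
peak age `E[A_i^CS]`, viewed as a function of source `i`'s own rate `t = λ_i`
(the other rates being fixed), has strictly negative derivative and is strictly
decreasing on `(0, ∞)`. -/
theorem stmt_14 {Ω : Type*} [MeasureSpace Ω] {μ : Measure Ω} [IsProbabilityMeasure μ]
    (U : Ω → ℝ) (hU0 : ∀ ω, 0 ≤ U ω) (hUm : Measurable U) (hUi : Integrable U μ)
    (k : ℕ) (hk : 2 ≤ k) (lam θ : Fin k → ℝ) (hlam : ∀ j, 0 < lam j)
    (hθ0 : ∀ j, 0 ≤ θ j) (hθ1 : ∀ j, θ j ≤ 1) (i : Fin k) :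
    let S : ℝ := ∑ j ∈ Finset.univ.erase i, lam j
    let f : ℝ → ℝ := fun t =>
      (∑ j ∈ Finset.univ.erase i, θ j * (lam j / (S + t))) *
          ((1 - ∫ ω, Real.exp (-(S + t) * U ω) ∂μ) / (S + t))
        + θ i * (t / (S + t)) *
          ((1 - ∫ ω, Real.exp (-(S + t) * U ω) ∂μ) / (S + t))
        + 1 / t
    StrictAntiOn f (Set.Ioi 0) ∧
      ∀ t ∈ Set.Ioi (0 : ℝ), ∀ d : ℝ, HasDerivAt f d t → d < 0 := by
  intro S f
  set C : ℝ := ∑ j ∈ Finset.univ.erase i, θ j * lam j with hCdef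
  have hS0 : 0 ≤ S := Finset.sum_nonneg fun j _ => (hlam j).le
  have hC0 : 0 ≤ C := Finset.sum_nonneg fun j _ => mul_nonneg (hθ0 j) (hlam j).le
  have hCS : C ≤ S := Finset.sum_le_sum fun j _ => by
    nlinarith [hθ1 j, hθ0 j, (hlam j).le]
  set Iexp : ℝ → ℝ := fun x => ∫ ω, Real.exp (-x * U ω) ∂μ with hIdef
  have hfg : f = fun t => C / (S + t) * ((1 - Iexp (S + t)) / (S + t))
      + θ i * (t / (S + t)) * ((1 - Iexp (S + t)) / (S + t)) + 1 / t := by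
    funext t
    show (∑ j ∈ Finset.univ.erase i, θ j * (lam j / (S + t))) *
          ((1 - Iexp (S + t)) / (S + t))
        + θ i * (t / (S + t)) * ((1 - Iexp (S + t)) / (S + t)) + 1 / t = _
    have hsum : (∑ j ∈ Finset.univ.erase i, θ j * (lam j / (S + t)))
        = C / (S + t) := by
      rw [hCdef, Finset.sum_div]
      exact Finset.sum_congr rfl fun j _ => (mul_div_assoc _ _ _).symm
    rw [hsum]
  have key : ∀ t : ℝ, 0 < t → ∃ d, HasDerivAt f d t ∧ d < 0 := by
    intro t ht
    have hs0 : 0 < S + t := by linarith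
    set s : ℝ := S + t with hsdef
    set b : ℝ := 1 - Iexp s with hbdef
    set J : ℝ := ∫ ω, U ω * Real.exp (-s * U ω) ∂μ with hJdef
    have hexp_int : Integrable (fun ω => Real.exp (-s * U ω)) μ :=
      exp_integrable U hU0 hUm hs0.le
    have hUexp_int : Integrable (fun ω => U ω * Real.exp (-s * U ω)) μ :=
      Uexp_integrable U hU0 hUm hUi hs0.le
    have hI1 : Iexp s ≤ 1 := by
      have h1 := integral_mono hexp_int (integrable_const (1 : ℝ))
        (fun ω => Real.exp_le_one_iff.mpr (by nlinarith [hU0 ω]))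
      simp only [integral_const, measure_univ, probReal_univ, ENNReal.toReal_one, smul_eq_mul,
        one_mul, mul_one] at h1
      exact h1
    have hI0 : 0 ≤ Iexp s := integral_nonneg fun ω => (Real.exp_pos _).le
    have hb0 : 0 ≤ b := by rw [hbdef]; linarith
    have hb1 : b ≤ 1 := by rw [hbdef]; linarith
    have hJ0 : 0 ≤ J :=
      integral_nonneg fun ω => mul_nonneg (hU0 ω) (Real.exp_pos _).le
    have hJb : s * J ≤ b := by
      have hpt : ∀ ω, s * (U ω * Real.exp (-s * U ω)) ≤ 1 - Real.exp (-s * U ω) := by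
        intro ω
        have h := Real.add_one_le_exp (s * U ω)
        have he : Real.exp (s * U ω) * Real.exp (-s * U ω) = 1 := by
          rw [← Real.exp_add]; ring_nf; exact Real.exp_zero
        nlinarith [mul_le_mul_of_nonneg_right h (Real.exp_pos (-s * U ω)).le]
      have h2 := integral_mono (hUexp_int.const_mul s)
        ((integrable_const (1 : ℝ)).sub hexp_int) hpt
      simp only [Pi.sub_apply] at h2
      rw [integral_const_mul, integral_sub (integrable_const 1) hexp_int] at h2
      simp only [integral_const, measure_univ, probReal_univ, ENNReal.toReal_one, smul_eq_mul,
        one_mul, mul_one] at h2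
      exact h2
    -- derivative building blocks
    have hst : HasDerivAt (fun x : ℝ => S + x) 1 t := (hasDerivAt_id t).const_add S
    have hIs : HasDerivAt Iexp (∫ ω, -(U ω * Real.exp (-s * U ω)) ∂μ) s :=
      hasDerivAt_laplace U hU0 hUm hUi hs0
    have hIsJ : HasDerivAt Iexp (-J) s := by
      rwa [hJdef, ← integral_neg]
    have hIc : HasDerivAt (fun x => Iexp (S + x)) (-J) t := by
      exact (hIsJ.comp t hst).congr_deriv (by ring)
    have hbD : HasDerivAt (fun x => 1 - Iexp (S + x)) J t := by
      exact ((hasDerivAt_const t (1 : ℝ)).sub hIc).congr_deriv (by ring)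
    have hB : HasDerivAt (fun x => (1 - Iexp (S + x)) / (S + x))
        ((J * s - b * 1) / s ^ 2) t := hbD.div hst hs0.ne'
    have hA1 : HasDerivAt (fun x : ℝ => C / (S + x)) ((0 * s - C * 1) / s ^ 2) t :=
      (hasDerivAt_const t C).div hst hs0.ne'
    have hA2 : HasDerivAt (fun x : ℝ => θ i * (x / (S + x)))
        (θ i * ((1 * s - t * 1) / s ^ 2)) t :=
      ((hasDerivAt_id t).div hst hs0.ne').const_mul (θ i)
    have hinv : HasDerivAt (fun x : ℝ => 1 / x) ((0 * t - 1 * 1) / t ^ 2) t :=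
      (hasDerivAt_const t (1 : ℝ)).div (hasDerivAt_id t) ht.ne'
    have hg := ((hA1.mul hB).add (hA2.mul hB)).add hinv
    refine ⟨_, by rw [hfg]; exact hg, ?_⟩
    show (0 * s - C * 1) / s ^ 2 * ((1 - Iexp (S + t)) / (S + t))
        + C / (S + t) * ((J * s - b * 1) / s ^ 2)
        + (θ i * ((1 * s - t * 1) / s ^ 2) * ((1 - Iexp (S + t)) / (S + t))
          + θ i * (t / (S + t)) * ((J * s - b * 1) / s ^ 2))
        + (0 * t - 1 * 1) / t ^ 2 < 0
    have hbs : (1 - Iexp (S + t)) = b := by rw [hbdef]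
    rw [hbs, ← hsdef]
    clear hg hfg hA1 hA2 hB hinv hIc hIs hIsJ hbD hst hexp_int hUexp_int hbs hI0 hI1
    clear_value s b J Iexp C S f
    clear hIdef hJdef hbdef hCdef Iexp f hUi hUm hU0 U
    have hnum : -C * b + C * (J * s - b) + θ i * S * b + θ i * t * (J * s - b) ≤ S := by
      have h1 : C * (J * s - b) ≤ 0 :=
        mul_nonpos_of_nonneg_of_nonpos hC0 (by nlinarith)
      have h2 : θ i * t * (J * s - b) ≤ 0 :=
        mul_nonpos_of_nonneg_of_nonpos (mul_nonneg (hθ0 i) ht.le) (by nlinarith)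
      have h3 : θ i * S * b ≤ S := by
        nlinarith [mul_nonneg (mul_nonneg (sub_nonneg.2 (hθ1 i)) hS0) hb0,
          mul_nonneg hS0 (sub_nonneg.2 hb1), hθ0 i]
      nlinarith [mul_nonneg hC0 hb0]
    have hD : (0 * s - C * 1) / s ^ 2 * (b / s) + C / s * ((J * s - b * 1) / s ^ 2)
        + (θ i * ((1 * s - t * 1) / s ^ 2) * (b / s)
          + θ i * (t / s) * ((J * s - b * 1) / s ^ 2))
        + (0 * t - 1 * 1) / t ^ 2
        = (-C * b + C * (J * s - b) + θ i * (s - t) * b + θ i * t * (J * s - b)) / s ^ 3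
          - 1 / t ^ 2 := by
      field_simp
      ring
    rw [hD]
    have hSst : s - t = S := by rw [hsdef]; ring
    rw [hSst]
    have hfrac : (-C * b + C * (J * s - b) + θ i * S * b + θ i * t * (J * s - b)) / s ^ 3
        ≤ S / s ^ 3 := by gcongr
    have hlast : S / s ^ 3 < 1 / t ^ 2 := by
      rw [div_lt_div_iff₀ (by positivity) (by positivity), hsdef]
      nlinarith [sq_nonneg S, mul_pos ht ht, mul_pos (mul_pos ht ht) ht,
        mul_nonneg (mul_nonneg hS0 hS0) hS0, mul_nonneg (mul_nonneg hS0 hS0) ht.le,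
        mul_nonneg (mul_nonneg hS0 ht.le) ht.le]
    linarith
  constructor
  · apply strictAntiOn_of_deriv_neg (convex_Ioi 0)
    · intro x hx
      obtain ⟨d, hd, _⟩ := key x hx
      exact hd.differentiableAt.continuousAt.continuousWithinAt
    · intro x hx
      rw [interior_Ioi] at hx
      obtain ⟨d, hd, hdneg⟩ := key x hx
      rw [hd.deriv]
      exact hdneg
  · intro t ht d hd
    obtain ⟨d₀, hd₀, hneg⟩ := key t ht
    rwa [hd.unique hd₀]
end

section
/- Let k ≥ 1, λ_1,…,λ_k > 0 with λ = Σ λ_l, h_1,…,h_k ≥ 0, N ≥ 1, and U a nonnegative random variable with mean u. For θ_l = 1 for all l, the peak age E[A_i](λ) = (1 - E[e^{-λU}])/λ + h_i + Σ_l (λ_l h_l)/λ_i + N/λ_i + (λ/λ_i)·u satisfies ∂E[A_i]/∂λ_j = (λE[Ue^{-λU}] - 1 + E[e^{-λU}])/λ² + h_j/λ_i + u/λ_i ≥ (λE[Ue^{-λU}] - 1 + E[e^{-λU}] + λu)/λ² ≥ 0 for every j ≠ i; hence E[A_i] is nondecreasing in λ_j for j ≠ i. -/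
open MeasureTheory Finset

section Aux
variable {Ω : Type*} [MeasureSpace Ω] {μ : Measure Ω} [IsProbabilityMeasure μ]
  {U : Ω → ℝ}

lemma aux_exp_int (hU0 : ∀ ω, 0 ≤ U ω) (hUm : Measurable U) {x : ℝ} (hx : 0 ≤ x) :
    Integrable (fun ω => Real.exp (-x * U ω)) μ := by
  apply (integrable_const (1 : ℝ)).mono'
  · exact ((hUm.const_mul (-x)).exp).aestronglyMeasurable
  · filter_upwards with ω
    rw [Real.norm_eq_abs, abs_of_pos (Real.exp_pos _)]
    apply Real.exp_le_one_iff.2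
    nlinarith [hU0 ω]

omit [IsProbabilityMeasure μ] in
lemma aux_Uexp_int (hU0 : ∀ ω, 0 ≤ U ω) (hUm : Measurable U) (hUi : Integrable U μ)
    {x : ℝ} (hx : 0 ≤ x) :
    Integrable (fun ω => U ω * Real.exp (-x * U ω)) μ := by
  apply hUi.mono'
  · exact (hUm.mul (hUm.const_mul (-x)).exp).aestronglyMeasurable
  · filter_upwards with ω
    rw [Real.norm_eq_abs, abs_of_nonneg (mul_nonneg (hU0 ω) (Real.exp_pos _).le)]
    have h1 : Real.exp (-x * U ω) ≤ 1 := Real.exp_le_one_iff.2 (by nlinarith [hU0 ω])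
    nlinarith [hU0 ω, Real.exp_pos (-x * U ω)]

lemma aux_deriv (hU0 : ∀ ω, 0 ≤ U ω) (hUm : Measurable U) (hUi : Integrable U μ)
    {x : ℝ} (hx : 0 < x) :
    HasDerivAt (fun y => ∫ ω, Real.exp (-y * U ω) ∂μ)
      (-(∫ ω, U ω * Real.exp (-x * U ω) ∂μ)) x := by
  have key := hasDerivAt_integral_of_dominated_loc_of_deriv_le (μ := μ)
      (F := fun y ω => Real.exp (-y * U ω))
      (F' := fun y ω => -(U ω * Real.exp (-y * U ω)))
      (bound := fun ω => U ω) (x₀ := x) (Metric.ball_mem_nhds x (half_pos hx))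
      (Filter.Eventually.of_forall fun y =>
        ((hUm.const_mul (-y)).exp).aestronglyMeasurable)
      (aux_exp_int hU0 hUm hx.le)
      ((hUm.mul (hUm.const_mul (-x)).exp).neg.aestronglyMeasurable)
      ?_ hUi ?_
  · have := key.2
    simp only [integral_neg] at this
    exact this
  · filter_upwards with ω y hy
    have hy0 : 0 ≤ y := by
      have := abs_lt.1 (mem_ball_iff_norm.1 hy)
      linarith [this.1]
    rw [norm_neg, Real.norm_eq_abs,
      abs_of_nonneg (mul_nonneg (hU0 ω) (Real.exp_pos _).le)]
    have h1 : Real.exp (-y * U ω) ≤ 1 := Real.exp_le_one_iff.2 (by nlinarith [hU0 ω])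
    nlinarith [hU0 ω, Real.exp_pos (-y * U ω)]
  · filter_upwards with ω y hy
    have h1 : HasDerivAt (fun y : ℝ => -y * U ω) (-U ω) y := by
      simpa using ((hasDerivAt_id y).neg.mul_const (U ω))
    have := h1.exp
    exact this.congr_deriv (by ring)

lemma aux_key (hU0 : ∀ ω, 0 ≤ U ω) (hUm : Measurable U) (hUi : Integrable U μ)
    {x : ℝ} (hx : 0 ≤ x) :
    1 ≤ x * (∫ ω, U ω * Real.exp (-x * U ω) ∂μ) + (∫ ω, Real.exp (-x * U ω) ∂μ)
      + x * (∫ ω, U ω ∂μ) := by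
  have hi1 := aux_Uexp_int hU0 hUm hUi hx
  have hi2 := aux_exp_int (μ := μ) hU0 hUm hx
  have e1 : Integrable (fun ω => x * (U ω * Real.exp (-x * U ω)) + Real.exp (-x * U ω)) μ :=
    (hi1.const_mul x).add hi2
  have e2 : Integrable
      (fun ω => x * (U ω * Real.exp (-x * U ω)) + Real.exp (-x * U ω) + x * U ω) μ :=
    e1.add (hUi.const_mul x)
  calc (1 : ℝ) = ∫ _ω, (1 : ℝ) ∂μ := by simp
    _ ≤ ∫ ω, (x * (U ω * Real.exp (-x * U ω)) + Real.exp (-x * U ω) + x * U ω) ∂μ := by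
        apply integral_mono (integrable_const 1) e2
        intro ω
        simp only [Pi.add_apply]
        have h1 := Real.add_one_le_exp (-x * U ω)
        have h2 : 0 ≤ x * U ω := mul_nonneg hx (hU0 ω)
        nlinarith [Real.exp_pos (-x * U ω),
          mul_nonneg h2 (Real.exp_pos (-x * U ω)).le]
    _ = _ := by
        rw [integral_add e1 (hUi.const_mul x),
          integral_add (hi1.const_mul x) hi2, integral_const_mul, integral_const_mul]

end Aux

/-- Lemma 2: with all sleeping probabilities equal to 1, the peak age `E[A_i]`
viewed as a function of another source's rate `t = λ_j` (`j ≠ i`) has derivative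
`(λE[Ue^{-λU}] - 1 + E[e^{-λU}])/λ² + h_j/λ_i + u/λ_i ≥ 0` (where `λ = S + t`),
and is nondecreasing on `(0, ∞)`. -/
theorem stmt_15 {Ω : Type*} [MeasureSpace Ω] {μ : Measure Ω} [IsProbabilityMeasure μ]
    (U : Ω → ℝ) (hU0 : ∀ ω, 0 ≤ U ω) (hUm : Measurable U) (hUi : Integrable U μ)
    (k : ℕ) (hk : 1 ≤ k) (lam h : Fin k → ℝ) (u : ℝ)
    (hlam : ∀ l, 0 < lam l) (hh : ∀ l, 0 ≤ h l) (hu : 0 ≤ u)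
    (hUmean : (∫ ω, U ω ∂μ) = u)
    (N : ℝ) (hN : 1 ≤ N) (i j : Fin k) (hij : j ≠ i) :
    let S : ℝ := ∑ l ∈ Finset.univ.erase j, lam l
    let g : ℝ → ℝ := fun t =>
      (1 - ∫ ω, Real.exp (-(S + t) * U ω) ∂μ) / (S + t) + h i
        + ((∑ l ∈ Finset.univ.erase j, lam l * h l) + t * h j) / lam i
        + N / lam i + ((S + t) / lam i) * u
    (∀ t ∈ Set.Ioi (0 : ℝ),
        HasDerivAt g
          (((S + t) * (∫ ω, U ω * Real.exp (-(S + t) * U ω) ∂μ) - 1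
              + (∫ ω, Real.exp (-(S + t) * U ω) ∂μ)) / (S + t) ^ 2
            + h j / lam i + u / lam i) t ∧
        0 ≤ ((S + t) * (∫ ω, U ω * Real.exp (-(S + t) * U ω) ∂μ) - 1
              + (∫ ω, Real.exp (-(S + t) * U ω) ∂μ)) / (S + t) ^ 2
            + h j / lam i + u / lam i) ∧
      MonotoneOn g (Set.Ioi 0) := by
  intro S g
  have hiS : lam i ≤ S :=
    Finset.single_le_sum (fun l _ => (hlam l).le)
      (Finset.mem_erase.2 ⟨hij.symm, Finset.mem_univ i⟩)
  have hSpos : 0 < S := lt_of_lt_of_le (hlam i) hiS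
  have key : ∀ t ∈ Set.Ioi (0 : ℝ),
      HasDerivAt g
        (((S + t) * (∫ ω, U ω * Real.exp (-(S + t) * U ω) ∂μ) - 1
            + (∫ ω, Real.exp (-(S + t) * U ω) ∂μ)) / (S + t) ^ 2
          + h j / lam i + u / lam i) t ∧
      0 ≤ ((S + t) * (∫ ω, U ω * Real.exp (-(S + t) * U ω) ∂μ) - 1
            + (∫ ω, Real.exp (-(S + t) * U ω) ∂μ)) / (S + t) ^ 2
          + h j / lam i + u / lam i := by
    intro t ht
    have ht0 : 0 < t := ht
    have hl : 0 < S + t := by linarith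
    set IU := ∫ ω, U ω * Real.exp (-(S + t) * U ω) ∂μ with hIU
    set IE := ∫ ω, Real.exp (-(S + t) * U ω) ∂μ with hIE
    constructor
    · -- derivative
      have h0 : HasDerivAt (fun t : ℝ => S + t) 1 t := (hasDerivAt_id t).const_add S
      have hF : HasDerivAt (fun t => ∫ ω, Real.exp (-(S + t) * U ω) ∂μ) (-IU) t := by
        have := HasDerivAt.comp t (aux_deriv hU0 hUm hUi hl) h0
        rw [mul_one] at this
        exact this
      have hnum : HasDerivAt (fun t => 1 - ∫ ω, Real.exp (-(S + t) * U ω) ∂μ) IU t := by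
        simpa using hF.const_sub 1
      have hq : HasDerivAt (fun t => (1 - ∫ ω, Real.exp (-(S + t) * U ω) ∂μ) / (S + t))
          ((IU * (S + t) - (1 - IE) * 1) / (S + t) ^ 2) t := hnum.div h0 (ne_of_gt hl)
      have hlin : HasDerivAt
          (fun t => ((∑ l ∈ Finset.univ.erase j, lam l * h l) + t * h j) / lam i)
          (h j / lam i) t := by
        have := (((hasDerivAt_id t).mul_const (h j)).const_add
          (∑ l ∈ Finset.univ.erase j, lam l * h l)).div_const (lam i)
        simpa using this
      have hlast : HasDerivAt (fun t => ((S + t) / lam i) * u) (u / lam i) t := by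
        have := ((h0.div_const (lam i)).mul_const u)
        simpa [div_mul_eq_mul_div, div_eq_mul_inv, mul_comm] using this
      have total := (((hq.add_const (h i)).add hlin).add_const (N / lam i)).add hlast
      exact total.congr_deriv (by ring)
    · -- nonnegativity
      have hkey := aux_key (μ := μ) hU0 hUm hUi hl.le
      rw [hUmean] at hkey
      have hA : -((S + t) * u) ≤ (S + t) * IU - 1 + IE := by
        rw [hIU, hIE]; linarith
      have h1 : -(u / (S + t)) ≤ ((S + t) * IU - 1 + IE) / (S + t) ^ 2 := by
        have := (div_le_div_iff_of_pos_right (by positivity : (0:ℝ) < (S + t) ^ 2)).2 hA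
        calc -(u / (S + t)) = -((S + t) * u) / (S + t) ^ 2 := by
              field_simp
          _ ≤ _ := this
      have h2 : u / (S + t) ≤ u / lam i :=
        div_le_div_of_nonneg_left hu (hlam i) (by linarith)
      have h3 : 0 ≤ h j / lam i := div_nonneg (hh j) (hlam i).le
      linarith
  refine ⟨key, ?_⟩
  apply monotoneOn_of_deriv_nonneg (convex_Ioi 0)
  · exact fun t ht => ((key t ht).1).differentiableAt.continuousAt.continuousWithinAt
  · rw [interior_Ioi]
    exact fun t ht => ((key t ht).1).differentiableAt.differentiableWithinAt
  · rw [interior_Ioi]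
    intro t ht
    rw [((key t ht).1).deriv]
    exact (key t ht).2
end
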